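/- arXiv:2511.11363 — 3 statements merged into one kernel-verified Lean document; each statement's English description precedes it below -/
import Mathlib

section
/- Pointwise logistic–entropy lower bound: Let 0 < h̲ ≤ h̄, 0 < k̲ ≤ k̄ and χ > 0 be constants. Then there exist constants κ > 0 and c ≥ 0 such that for every s > 0, every t ∈ [−1, 1], every H ∈ [h̲, h̄] and every K ∈ [k̲, k̄] one has (H s² − K s)(log s − χ t) ≥ (h̲/2) s² log(1 + s) + κ s log(1 + s) − c. -/
/-!
For large `s` both factors are nonnegative and monotone in the parameters, so the left side is at
least `s (h̲ s - k̄) (log s - χ)`; once `h̲ s ≥ 4 k̄ + 6` and `log s ≥ 3 χ + 2` these two factors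
dominate `3/2 (h̲ s / 2 + 1)` and `2/3 (log s + 1) ≥ 2/3 log (1 + s)`, which gives the bound with
`κ = 1` and `c = 0`. On the remaining bounded range `0 < s ≤ R` both sides are bounded, thanks to
`|log s| ≤ s + s⁻¹`, which fixes `c`.
-/

open Real

namespace Real

lemma abs_log_le_self_add_inv {x : ℝ} (hx : 0 ≤ x) : |log x| ≤ x + x⁻¹ :=
  abs_le.2 ⟨by linarith [neg_inv_le_log hx], by linarith [log_le_self hx, inv_nonneg.2 hx]⟩

lemma log_one_add_le_log_add_inv {x : ℝ} (hx : 0 < x) : log (1 + x) ≤ log x + x⁻¹ := by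
  have h := log_le_sub_one_of_pos (x := (1 + x) / x) (by positivity)
  rw [log_div (by positivity) hx.ne', add_div, div_self hx.ne', one_div] at h
  linarith

lemma log_one_add_le_log_add_one {x : ℝ} (hx : 1 ≤ x) : log (1 + x) ≤ log x + 1 :=
  (log_one_add_le_log_add_inv (by linarith)).trans (by gcongr; exact inv_le_one_of_one_le₀ hx)

end Real

lemma abs_quadratic_mul_log_sub_le {M N χ a b s t R : ℝ} (hM : 0 ≤ M) (hN : 0 ≤ N) (hχ : 0 ≤ χ)
    (ha : |a| ≤ M) (hb : |b| ≤ N) (ht : |t| ≤ 1) (hs : 0 < s) (hsR : s ≤ R) :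
    |(a * s ^ 2 - b * s) * (log s - χ * t)| ≤ (M * R + N) * (R ^ 2 + 1 + χ * R) := by
  have hR : 0 ≤ R := hs.le.trans hsR
  have hP : |a * s ^ 2 - b * s| ≤ (M * s + N) * s := by
    calc |a * s ^ 2 - b * s| ≤ |a * s ^ 2| + |b * s| := abs_sub _ _
      _ = |a| * s ^ 2 + |b| * s := by
        rw [abs_mul, abs_mul, abs_of_pos hs, abs_of_nonneg (sq_nonneg s)]
      _ ≤ (M * s + N) * s := by nlinarith
  have hQ : |log s - χ * t| ≤ s + s⁻¹ + χ := by
    have hχt : |χ * t| ≤ χ := by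
      rw [abs_mul, abs_of_nonneg hχ]; exact mul_le_of_le_one_right hχ ht
    linarith [abs_sub (log s) (χ * t), abs_log_le_self_add_inv hs.le]
  calc |(a * s ^ 2 - b * s) * (log s - χ * t)|
      ≤ (M * s + N) * s * (s + s⁻¹ + χ) := by
        rw [abs_mul]; exact mul_le_mul hP hQ (abs_nonneg _) (by positivity)
    _ = (M * s + N) * (s ^ 2 + 1 + χ * s) := by field_simp
    _ ≤ (M * R + N) * (R ^ 2 + 1 + χ * R) := by gcongr

lemma mul_mul_log_sub_le_quadratic_mul {hlo khi χ H K s t : ℝ} (hH : hlo ≤ H) (hK : K ≤ khi)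
    (hχ : 0 ≤ χ) (ht : t ≤ 1) (hs : 0 < s) (hP : 0 ≤ hlo * s - khi) (hQ : 0 ≤ log s - χ) :
    s * (hlo * s - khi) * (log s - χ) ≤ (H * s ^ 2 - K * s) * (log s - χ * t) :=
  mul_le_mul (by nlinarith) (by nlinarith) hQ (by nlinarith)

lemma mul_log_one_add_le_quadratic_mul_of_large {hlo khi χ H K s t : ℝ} (hlo0 : 0 < hlo)
    (hχ : 0 ≤ χ) (hH : hlo ≤ H) (hK : K ≤ khi) (ht : t ≤ 1) (hs : 0 < s)
    (hsK : 4 * khi + 6 ≤ hlo * s) (hsL : 3 * χ + 2 ≤ log s) :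
    hlo / 2 * s ^ 2 * log (1 + s) + s * log (1 + s) ≤ (H * s ^ 2 - K * s) * (log s - χ * t) := by
  have hs1 : 1 ≤ s := ((log_pos_iff hs.le).1 (by linarith)).le
  have hP : 0 ≤ hlo * s - khi := by linarith [mul_pos hlo0 hs]
  calc hlo / 2 * s ^ 2 * log (1 + s) + s * log (1 + s) = s * (hlo / 2 * s + 1) * log (1 + s) := by
        ring
    _ ≤ s * (3 / 2 * (hlo / 2 * s + 1)) * (2 / 3 * (log s + 1)) := by
        rw [show s * (3 / 2 * (hlo / 2 * s + 1)) * (2 / 3 * (log s + 1))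
          = s * (hlo / 2 * s + 1) * (log s + 1) by ring]
        gcongr
        exact log_one_add_le_log_add_one hs1
    _ ≤ s * (hlo * s - khi) * (log s - χ) :=
        mul_le_mul (mul_le_mul_of_nonneg_left (by linarith) hs.le) (by linarith) (by linarith)
          (mul_nonneg hs.le hP)
    _ ≤ (H * s ^ 2 - K * s) * (log s - χ * t) :=
        mul_mul_log_sub_le_quadratic_mul hH hK hχ ht hs hP (by linarith)

lemma mul_log_one_add_le_of_le {a s R : ℝ} (ha : 0 ≤ a) (hs : 0 ≤ s) (hsR : s ≤ R) :
    a * s ^ 2 * log (1 + s) + s * log (1 + s) ≤ a * R ^ 3 + R ^ 2 := by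
  have hR : 0 ≤ R := hs.trans hsR
  have hlog : log (1 + s) ≤ R := (log_le_sub_one_of_pos (by linarith)).trans (by linarith)
  calc a * s ^ 2 * log (1 + s) + s * log (1 + s) = (a * s ^ 2 + s) * log (1 + s) := by ring
    _ ≤ (a * R ^ 2 + R) * R := by gcongr; exact log_nonneg (by linarith)
    _ = a * R ^ 3 + R ^ 2 := by ring

/-- **Pointwise logistic–entropy lower bound.** Given `0 < h̲ ≤ h̄`, `0 < k̲ ≤ k̄`
and `χ > 0`, there are `κ > 0` and `c ≥ 0` such that for all `s > 0`, `t ∈ [-1,1]`,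
`H ∈ [h̲, h̄]`, `K ∈ [k̲, k̄]`:
`(H s² − K s)(log s − χ t) ≥ (h̲/2) s² log(1+s) + κ s log(1+s) − c`. -/
theorem logistic_entropy_lower_bound
    (hlo hhi klo khi χ : ℝ)
    (h1 : 0 < hlo) (h2 : hlo ≤ hhi) (h3 : 0 < klo) (h4 : klo ≤ khi) (hχ : 0 < χ) :
    ∃ κ > (0:ℝ), ∃ c ≥ (0:ℝ),
      ∀ s > (0:ℝ), ∀ t ∈ Set.Icc (-1:ℝ) 1,
        ∀ H ∈ Set.Icc hlo hhi, ∀ K ∈ Set.Icc klo khi,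
          (H * s ^ 2 - K * s) * (Real.log s - χ * t)
            ≥ hlo / 2 * s ^ 2 * Real.log (1 + s) + κ * s * Real.log (1 + s) - c := by
  have hhi0 : 0 ≤ hhi := h1.le.trans h2
  have hkhi0 : 0 ≤ khi := h3.le.trans h4
  obtain ⟨R, hR0, hRL, hRK⟩ : ∃ R ≥ 0, exp (3 * χ + 2) ≤ R ∧ (4 * khi + 6) / hlo ≤ R :=
    ⟨_, (exp_pos _).le.trans (le_max_left _ _), le_max_left _ _, le_max_right _ _⟩
  have hc : 0 ≤ (hhi * R + khi) * (R ^ 2 + 1 + χ * R) + (hlo / 2 * R ^ 3 + R ^ 2) := by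
    positivity
  refine ⟨1, one_pos, _, hc, ?_⟩
  rintro s hs t ⟨ht₁, ht₂⟩ H ⟨hH₁, hH₂⟩ K ⟨hK₁, hK₂⟩
  rw [one_mul, ge_iff_le]
  rcases le_total s R with hsR | hRs
  · have hLHS := neg_le_of_abs_le <| abs_quadratic_mul_log_sub_le hhi0 hkhi0 hχ.le
      (abs_le.2 ⟨by linarith, hH₂⟩) (abs_le.2 ⟨by linarith, hK₂⟩) (abs_le.2 ⟨ht₁, ht₂⟩) hs hsR
    linarith [mul_log_one_add_le_of_le (half_pos h1).le hs.le hsR]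
  · have hsL : 3 * χ + 2 ≤ log s := (le_log_iff_exp_le hs).2 (hRL.trans hRs)
    have hsK : 4 * khi + 6 ≤ hlo * s := by rw [← div_le_iff₀' h1]; exact hRK.trans hRs
    linarith [mul_log_one_add_le_quadratic_mul_of_large h1 hχ.le hH₁ hK₂ ht₂ hs hsK hsL]
end

section
/- Coercivity of the physical energy: Let (Ω, μ) be a finite measure space, let χ > 0 and λ ≥ 0 be constants, and let β̂ : ℝ → [0, +∞] be a convex, lower semicontinuous function with β̂(0) = 0 and β̂(r) = +∞ for |r| > 1. Then there exist constants κ > 0 and c ≥ 0 such that: for every measurable φ : Ω → ℝ with |φ| ≤ 1 almost everywhere and β̂ ∘ φ integrable, every measurable σ : Ω → ℝ with σ ≥ 0 almost everywhere and σ log(1 + σ) integrable, and every real number G ≥ 0, one has (1/2) G + ∫_Ω (β̂(φ) − (λ/2) φ² + σ(log σ − 1) − χ σ φ) dμ ≥ κ (G + ∫_Ω φ² dμ + ∫_Ω σ log(1 + σ) dμ + ∫_Ω β̂(φ) dμ) − c. -/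
/-!
Since `|φ| ≤ 1`, the terms `β̂(φ) ≥ 0`, `-(λ/2) φ²` and `φ²` are harmless. The entropy
`σ (log σ - 1)` absorbs the coupling `-χ σ φ ≥ -χ σ` and still controls half of `σ log (1 + σ)`:
with `a = 1 + χ` one has `s log s ≥ s log (1 + s) - 1`, while `a s` is at most `a exp (2a)` for
`s ≤ exp (2a)` and at most `s log (1 + s) / 2` beyond. Integrating the resulting pointwise bound
gives `κ = 1/2` and `c = C(χ, λ) μ(Ω)`.
-/

open MeasureTheory Real
open scoped ENNReal

lemma mul_log_one_add_sub_one_le_mul_log {s : ℝ} (hs : 0 ≤ s) :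
    s * log (1 + s) - 1 ≤ s * log s := by
  rcases hs.eq_or_lt with rfl | hs
  · simp
  have h := log_le_sub_one_of_pos (show 0 < (1 + s) / s by positivity)
  rw [log_div (by positivity) hs.ne'] at h
  have h' := mul_le_mul_of_nonneg_left h hs.le
  rw [show s * ((1 + s) / s - 1) = 1 by field_simp; ring] at h'
  linarith

lemma le_mul_log_one_add_add_exp_one {s : ℝ} (hs : 0 ≤ s) : s ≤ s * log (1 + s) + exp 1 := by
  rcases le_total (exp 1) (1 + s) with h | h
  · have : 1 ≤ log (1 + s) := (le_log_iff_exp_le (by positivity)).2 h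
    nlinarith [exp_pos 1]
  · have : 0 ≤ s * log (1 + s) := mul_nonneg hs (log_nonneg (by linarith))
    linarith

lemma abs_mul_log_le_mul_log_one_add_add_one {s : ℝ} (hs : 0 ≤ s) :
    |s * log s| ≤ s * log (1 + s) + 1 := by
  have hS : 0 ≤ s * log (1 + s) := mul_nonneg hs (log_nonneg (by linarith))
  rcases le_total s 1 with h | h
  · rcases hs.eq_or_lt with rfl | hs
    · simp
    · have := abs_log_mul_self_lt s hs h
      rw [mul_comm]
      linarith
  · rw [abs_of_nonneg (mul_nonneg hs (log_nonneg h))]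
    have := mul_le_mul_of_nonneg_left (log_le_log (by linarith) (by linarith : s ≤ 1 + s)) hs
    linarith

lemma half_mul_log_one_add_sub_le_mul_log_sub_mul {a s : ℝ} (ha : 0 ≤ a) (hs : 0 ≤ s) :
    s * log (1 + s) / 2 - (1 + a * exp (2 * a)) ≤ s * log s - a * s := by
  have hlow := mul_log_one_add_sub_one_le_mul_log hs
  have hexp : 0 ≤ a * exp (2 * a) := mul_nonneg ha (exp_pos _).le
  rcases le_total s (exp (2 * a)) with h | h
  · have := mul_le_mul_of_nonneg_left h ha
    have : 0 ≤ s * log (1 + s) := mul_nonneg hs (log_nonneg (by linarith))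
    linarith
  · have h2a : 2 * a ≤ log (1 + s) := (le_log_iff_exp_le (by linarith)).2 (by linarith)
    have := mul_le_mul_of_nonneg_left h2a hs
    linarith

/- `(λ + 1) / 2` pays for `-(λ/2) φ²` and `φ²/2`; the rest is the constant of
`half_mul_log_one_add_sub_le_mul_log_sub_mul` at `a = 1 + χ`. -/
noncomputable def coercivityConst (χ lam : ℝ) : ℝ :=
  (lam + 1) / 2 + (1 + (1 + χ) * exp (2 * (1 + χ)))

lemma coercivityConst_nonneg {χ lam : ℝ} (hχ : 0 ≤ χ) (hlam : 0 ≤ lam) :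
    0 ≤ coercivityConst χ lam := by
  unfold coercivityConst
  positivity

lemma half_add_le_energy_integrand_add_coercivityConst {χ lam b p s : ℝ} (hχ : 0 ≤ χ)
    (hlam : 0 ≤ lam) (hb : 0 ≤ b) (hp : |p| ≤ 1) (hs : 0 ≤ s) :
    (b + p ^ 2 + s * log (1 + s)) / 2
      ≤ b - lam / 2 * p ^ 2 + s * (log s - 1) - χ * s * p + coercivityConst χ lam := by
  have hentropy := half_mul_log_one_add_sub_le_mul_log_sub_mul (by linarith : 0 ≤ 1 + χ) hs
  have hcoupling : χ * s * p ≤ χ * s :=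
    mul_le_of_le_one_right (mul_nonneg hχ hs) (abs_le.1 hp).2
  have hp2 : (lam + 1) / 2 * p ^ 2 ≤ (lam + 1) / 2 :=
    mul_le_of_le_one_right (by linarith) ((sq_le_one_iff_abs_le_one p).2 hp)
  unfold coercivityConst
  linarith

section Integrability

variable {α : Type*} [MeasurableSpace α] {μ : Measure α} [IsFiniteMeasure μ] {σ : α → ℝ}

lemma integrable_of_integrable_mul_log_one_add (hσm : AEMeasurable σ μ)
    (hσ0 : ∀ᵐ x ∂μ, 0 ≤ σ x) (hS : Integrable (fun x => σ x * log (1 + σ x)) μ) :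
    Integrable σ μ := by
  refine (hS.add (integrable_const (exp 1))).mono' hσm.aestronglyMeasurable ?_
  filter_upwards [hσ0] with x hx
  rw [norm_of_nonneg hx]
  exact le_mul_log_one_add_add_exp_one hx

lemma integrable_mul_log_of_integrable_mul_log_one_add (hσm : AEMeasurable σ μ)
    (hσ0 : ∀ᵐ x ∂μ, 0 ≤ σ x) (hS : Integrable (fun x => σ x * log (1 + σ x)) μ) :
    Integrable (fun x => σ x * log (σ x)) μ := by
  refine (hS.add (integrable_const 1)).mono'
    (hσm.mul (measurable_log.comp_aemeasurable hσm)).aestronglyMeasurable ?_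
  filter_upwards [hσ0] with x hx
  exact abs_mul_log_le_mul_log_one_add_add_one hx

lemma integrable_sq_of_abs_le_one {φ : α → ℝ} (hφm : AEMeasurable φ μ)
    (hφ1 : ∀ᵐ x ∂μ, |φ x| ≤ 1) : Integrable (fun x => φ x ^ 2) μ := by
  refine Integrable.of_bound (hφm.pow_const 2).aestronglyMeasurable 1 ?_
  filter_upwards [hφ1] with x hx
  rw [norm_pow, Real.norm_eq_abs]
  exact pow_le_one₀ (abs_nonneg _) hx

end Integrability

theorem energy_coercivity_general
    {Ω : Type*} [MeasurableSpace Ω] (μ : Measure Ω) [IsFiniteMeasure μ]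
    (χ lam : ℝ) (hχ : 0 < χ) (hlam : 0 ≤ lam)
    (B : ℝ → ℝ≥0∞)
    (hB_lsc : LowerSemicontinuous B) :
    ∃ κ > (0:ℝ), ∃ c ≥ (0:ℝ),
      ∀ (φ σ : Ω → ℝ) (G : ℝ),
        Measurable φ → (∀ᵐ x ∂μ, |φ x| ≤ 1) →
        (∫⁻ x, B (φ x) ∂μ) ≠ ⊤ →
        Measurable σ → (∀ᵐ x ∂μ, 0 ≤ σ x) →
        Integrable (fun x => σ x * Real.log (1 + σ x)) μ →
        0 ≤ G →
        (1/2) * G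
          + ∫ x, ((B (φ x)).toReal - lam / 2 * (φ x) ^ 2
              + σ x * (Real.log (σ x) - 1) - χ * σ x * φ x) ∂μ
        ≥ κ * (G + (∫ x, (φ x) ^ 2 ∂μ) + (∫ x, σ x * Real.log (1 + σ x) ∂μ)
              + (∫ x, (B (φ x)).toReal ∂μ)) - c := by
  refine ⟨1 / 2, by norm_num, coercivityConst χ lam * μ.real Set.univ,
    mul_nonneg (coercivityConst_nonneg hχ.le hlam) measureReal_nonneg, ?_⟩
  intro φ σ G hφm hφ1 hBfin hσm hσ0 hS hG
  have hB : Integrable (fun x => (B (φ x)).toReal) μ :=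
    integrable_toReal_of_lintegral_ne_top (hB_lsc.measurable.comp hφm).aemeasurable hBfin
  have hφ2 := integrable_sq_of_abs_le_one hφm.aemeasurable hφ1
  have hσ := integrable_of_integrable_mul_log_one_add hσm.aemeasurable hσ0 hS
  have hσlogσ := integrable_mul_log_of_integrable_mul_log_one_add hσm.aemeasurable hσ0 hS
  have hcoupling : Integrable (fun x => χ * σ x * φ x) μ :=
    (hσ.const_mul χ).mul_bdd hφm.aestronglyMeasurable (by simpa only [Real.norm_eq_abs])
  have hdensity : Integrable (fun x => (B (φ x)).toReal - lam / 2 * (φ x) ^ 2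
      + σ x * (Real.log (σ x) - 1) - χ * σ x * φ x) μ :=
    (((hB.sub (hφ2.const_mul (lam / 2))).add (hσlogσ.sub hσ)).sub hcoupling).congr
      (ae_of_all _ fun x => by simp only [Pi.add_apply, Pi.sub_apply]; ring)
  have hBφ2 : Integrable (fun x => (B (φ x)).toReal + φ x ^ 2) μ := hB.add hφ2
  have hmono : ∫ x, ((B (φ x)).toReal + φ x ^ 2 + σ x * log (1 + σ x)) / 2 ∂μ
      ≤ ∫ x, ((B (φ x)).toReal - lam / 2 * φ x ^ 2 + σ x * (log (σ x) - 1) - χ * σ x * φ x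
          + coercivityConst χ lam) ∂μ := by
    refine integral_mono_ae ((hBφ2.add hS).div_const 2)
      (hdensity.add (integrable_const _)) ?_
    filter_upwards [hφ1, hσ0] with x hφx hσx
    exact half_add_le_energy_integrand_add_coercivityConst hχ.le hlam ENNReal.toReal_nonneg hφx hσx
  rw [integral_div, integral_add hBφ2 hS, integral_add hB hφ2,
    integral_add hdensity (integrable_const _), integral_const, smul_eq_mul] at hmono
  linarith

/-- **Coercivity of the physical energy.** Let `(Ω, μ)` be a finite measure space,
`χ > 0`, `λ ≥ 0`, and let `B = β̂ : ℝ → [0, +∞]` be convex, lower semicontinuous,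
with `β̂ 0 = 0` and `β̂ r = +∞` for `|r| > 1`. Then there are `κ > 0` and `c ≥ 0`
such that for all measurable `φ` with `|φ| ≤ 1` a.e. and `β̂ ∘ φ` integrable, all
measurable `σ ≥ 0` a.e. with `σ log(1+σ)` integrable, and all `G ≥ 0`:
`(1/2) G + ∫ (β̂(φ) − (λ/2)φ² + σ(log σ − 1) − χ σ φ)
  ≥ κ (G + ∫ φ² + ∫ σ log(1+σ) + ∫ β̂(φ)) − c`. -/
theorem energy_coercivity
    {Ω : Type*} [MeasurableSpace Ω] (μ : Measure Ω) [IsFiniteMeasure μ]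
    (χ lam : ℝ) (hχ : 0 < χ) (hlam : 0 ≤ lam)
    (B : ℝ → ℝ≥0∞)
    (hB_conv : ∀ x y t : ℝ, 0 ≤ t → t ≤ 1 →
      B (t * x + (1 - t) * y) ≤ ENNReal.ofReal t * B x + ENNReal.ofReal (1 - t) * B y)
    (hB_lsc : LowerSemicontinuous B)
    (hB0 : B 0 = 0)
    (hB_top : ∀ r : ℝ, 1 < |r| → B r = ⊤) :
    ∃ κ > (0:ℝ), ∃ c ≥ (0:ℝ),
      ∀ (φ σ : Ω → ℝ) (G : ℝ),
        Measurable φ → (∀ᵐ x ∂μ, |φ x| ≤ 1) →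
        (∫⁻ x, B (φ x) ∂μ) ≠ ⊤ →
        Measurable σ → (∀ᵐ x ∂μ, 0 ≤ σ x) →
        Integrable (fun x => σ x * Real.log (1 + σ x)) μ →
        0 ≤ G →
        (1/2) * G
          + ∫ x, ((B (φ x)).toReal - lam / 2 * (φ x) ^ 2
              + σ x * (Real.log (σ x) - 1) - χ * σ x * φ x) ∂μ
        ≥ κ * (G + (∫ x, (φ x) ^ 2 ∂μ) + (∫ x, σ x * Real.log (1 + σ x) ∂μ)
              + (∫ x, (B (φ x)).toReal ∂μ)) - c :=
  energy_coercivity_general μ χ lam hχ hlam B hB_lsc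
end

section
/- L^{6/5} Lipschitz–Hölder estimate for the difference of quadratic logistic terms: Let (Ω, μ) be a finite measure space, let h̄ > 0 and L > 0, and let h : ℝ × ℝ → ℝ satisfy |h(s, r)| ≤ h̄ and |h(s₁, r₁) − h(s₂, r₂)| ≤ L(|s₁ − s₂| + |r₁ − r₂|) for all arguments. Let σ₁ ∈ L⁶(μ), σ₂ ∈ L³(μ) and φ₁, φ₂ ∈ L²(μ) be measurable functions. Then ‖h(σ₁, φ₁) σ₁² − h(σ₂, φ₂) σ₂²‖_{L^{6/5}} ≤ L (‖σ₁ − σ₂‖_{L²} + ‖φ₁ − φ₂‖_{L²}) ‖σ₁‖²_{L⁶} + h̄ (‖σ₁‖_{L³} + ‖σ₂‖_{L³}) ‖σ₁ − σ₂‖_{L²}. -/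
/-!
Writing `hᵢ = h(σᵢ, φᵢ)`, we have `h₁σ₁² - h₂σ₂² = (h₁ - h₂)σ₁² + h₂(σ₁ + σ₂)(σ₁ - σ₂)`,
and the bounds `|h₁ - h₂| ≤ L(|σ₁ - σ₂| + |φ₁ - φ₂|)` and `|h₂| ≤ h̄` dominate it pointwise by a
sum of two products. Minkowski's inequality in `L^{6/5}` splits the sum and Hölder's inequality
with `5/6 = 1/2 + 1/3` splits each product, where `‖σ₁²‖₃ = ‖σ₁‖₆²`. The resulting bound holds for
the extended-valued norms `eLpNorm'` without any integrability assumption; integrability, through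
`L⁶ ⊂ L³ ⊂ L²` on a finite measure space, only makes the right-hand side finite, so that it can
be read in `ℝ`.
-/

open MeasureTheory

noncomputable def Lpnorm {Ω : Type*} [MeasurableSpace Ω] (μ : Measure Ω)
    (p : ℝ) (f : Ω → ℝ) : ℝ :=
  (∫ x, |f x| ^ p ∂μ) ^ (1 / p)

theorem abs_mul_sq_sub_mul_sq_le {a b s t ℓ M : ℝ} (hab : |a - b| ≤ ℓ) (hb : |b| ≤ M) :
    |a * s ^ 2 - b * t ^ 2| ≤ ℓ * s ^ 2 + M * (|s| + |t|) * |s - t| :=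
  calc |a * s ^ 2 - b * t ^ 2| = |(a - b) * s ^ 2 + b * ((s + t) * (s - t))| := by ring_nf
    _ ≤ |(a - b) * s ^ 2| + |b * ((s + t) * (s - t))| := abs_add_le _ _
    _ = |a - b| * s ^ 2 + |b| * (|s + t| * |s - t|) := by simp only [abs_mul, abs_sq]
    _ ≤ ℓ * s ^ 2 + M * (|s| + |t|) * |s - t| := by
      have hM : 0 ≤ M := (abs_nonneg b).trans hb
      rw [← mul_assoc]
      gcongr
      exact abs_add_le s t

theorem lipschitzWith_uncurry_of_abs_sub_le {h : ℝ → ℝ → ℝ} {L : ℝ} (hL : 0 ≤ L)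
    (h_lip : ∀ s₁ r₁ s₂ r₂ : ℝ, |h s₁ r₁ - h s₂ r₂| ≤ L * (|s₁ - s₂| + |r₁ - r₂|)) :
    LipschitzWith (Real.toNNReal (2 * L)) (Function.uncurry h) :=
  LipschitzWith.of_dist_le' fun p q =>
    calc |h p.1 p.2 - h q.1 q.2| ≤ L * (|p.1 - q.1| + |p.2 - q.2|) := h_lip _ _ _ _
      _ ≤ L * (dist p q + dist p q) := by
        rw [Prod.dist_eq, ← Real.dist_eq, ← Real.dist_eq]
        gcongr
        exacts [le_max_left _ _, le_max_right _ _]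
      _ = 2 * L * dist p q := by ring

section eLpNorm'

variable {Ω E F G : Type*} [MeasurableSpace Ω] {μ : Measure Ω}
  [NormedAddCommGroup E] [NormedAddCommGroup F] [NormedAddCommGroup G]

theorem Lpnorm_eq_toReal_eLpNorm' {p : ℝ} (hp : 0 < p) {f : Ω → ℝ}
    (hf : AEStronglyMeasurable f μ) : Lpnorm μ p f = (eLpNorm' f p μ).toReal := by
  have hm : AEStronglyMeasurable (fun x => |f x| ^ p) μ :=
    (hf.norm.aemeasurable.pow_const p).aestronglyMeasurable
  rw [Lpnorm, eLpNorm'_eq_lintegral_enorm, ← ENNReal.toReal_rpow,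
    integral_eq_lintegral_of_nonneg_ae (ae_of_all _ fun x => by positivity) hm]
  congr 3 with x
  rw [Real.enorm_eq_ofReal_abs, ENNReal.ofReal_rpow_of_nonneg (abs_nonneg _) hp.le]

theorem memLp_ofReal_of_integrable_abs_rpow {p : ℝ} (hp : 0 < p) {f : Ω → ℝ}
    (hf : AEStronglyMeasurable f μ) (hint : Integrable (fun x => |f x| ^ p) μ) :
    MemLp f (ENNReal.ofReal p) μ :=
  (integrable_norm_rpow_iff hf (by simpa using hp) ENNReal.ofReal_ne_top).1
    (by simpa [ENNReal.toReal_ofReal hp.le] using hint)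

theorem eLpNorm'_ne_top_of_memLp {p : ℝ} (hp : 0 < p) {f : Ω → E}
    (hf : MemLp f (ENNReal.ofReal p) μ) : eLpNorm' f p μ ≠ ⊤ := by
  simpa [eLpNorm_eq_eLpNorm', hp, ENNReal.toReal_ofReal hp.le] using hf.eLpNorm_ne_top

theorem eLpNorm'_pow (n : ℕ) (hn : n ≠ 0) (q : ℝ) (f : Ω → ℝ) :
    eLpNorm' (fun x => f x ^ n) q μ = eLpNorm' f (n * q) μ ^ n := by
  rw [← ENNReal.rpow_natCast, mul_comm, ← eLpNorm'_norm_rpow f q n (by positivity)]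
  exact eLpNorm'_congr_norm_ae (ae_of_all _ fun x => by simp)

theorem eLpNorm'_norm_mul_norm_le {p q r : ℝ} (hr : 0 < r) (hrp : r < p)
    (hpqr : 1 / r = 1 / p + 1 / q) {u : Ω → F} {v : Ω → G}
    (hu : AEStronglyMeasurable u μ) (hv : AEStronglyMeasurable v μ) :
    eLpNorm' (fun x => ‖u x‖ * ‖v x‖) r μ ≤ eLpNorm' u p μ * eLpNorm' v q μ := by
  simpa using eLpNorm'_le_eLpNorm'_mul_eLpNorm' hu hv (fun a b => ‖a‖ * ‖b‖) 1
    (ae_of_all _ fun x => by simp) hr hrp hpqr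

theorem eLpNorm'_le_of_norm_le_mul_add_mul {p q r : ℝ} (hr : 1 ≤ r) (hrp : r < p)
    (hpqr : 1 / r = 1 / p + 1 / q) {f : Ω → E} {u₁ u₂ : Ω → F} {v₁ v₂ : Ω → G}
    (hu₁ : AEStronglyMeasurable u₁ μ) (hv₁ : AEStronglyMeasurable v₁ μ)
    (hu₂ : AEStronglyMeasurable u₂ μ) (hv₂ : AEStronglyMeasurable v₂ μ)
    (hf : ∀ᵐ x ∂μ, ‖f x‖ ≤ ‖u₁ x‖ * ‖v₁ x‖ + ‖u₂ x‖ * ‖v₂ x‖) :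
    eLpNorm' f r μ ≤ eLpNorm' u₁ p μ * eLpNorm' v₁ q μ + eLpNorm' u₂ p μ * eLpNorm' v₂ q μ :=
  calc eLpNorm' f r μ ≤ eLpNorm' (fun x => ‖u₁ x‖ * ‖v₁ x‖ + ‖u₂ x‖ * ‖v₂ x‖) r μ :=
        eLpNorm'_mono_ae (by linarith) <| hf.mono fun x hx => hx.trans (le_abs_self _)
    _ ≤ eLpNorm' (fun x => ‖u₁ x‖ * ‖v₁ x‖) r μ + eLpNorm' (fun x => ‖u₂ x‖ * ‖v₂ x‖) r μ :=
        eLpNorm'_add_le (hu₁.norm.mul hv₁.norm) (hu₂.norm.mul hv₂.norm) hr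
    _ ≤ _ := add_le_add (eLpNorm'_norm_mul_norm_le (by linarith) hrp hpqr hu₁ hv₁)
        (eLpNorm'_norm_mul_norm_le (by linarith) hrp hpqr hu₂ hv₂)

theorem eLpNorm'_const_mul_norm_add_norm_le (c : ℝ) {p : ℝ} (hp : 1 ≤ p) {f g : Ω → E}
    (hf : AEStronglyMeasurable f μ) (hg : AEStronglyMeasurable g μ) :
    eLpNorm' (fun x => c * (‖f x‖ + ‖g x‖)) p μ ≤ ‖c‖ₑ * (eLpNorm' f p μ + eLpNorm' g p μ) :=
  calc eLpNorm' (fun x => c * (‖f x‖ + ‖g x‖)) p μ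
        = ‖c‖ₑ * eLpNorm' (fun x => ‖f x‖ + ‖g x‖) p μ :=
        eLpNorm'_const_smul c (by linarith)
    _ ≤ ‖c‖ₑ * (eLpNorm' (fun x => ‖f x‖) p μ + eLpNorm' (fun x => ‖g x‖) p μ) := by
        gcongr
        exact eLpNorm'_add_le hf.norm hg.norm hp
    _ = ‖c‖ₑ * (eLpNorm' f p μ + eLpNorm' g p μ) := by simp only [eLpNorm'_norm]

theorem eLpNorm'_mul_sq_sub_mul_sq_le {p q r M : ℝ} (hr : 1 ≤ r) (hrp : r < p) (hq : 1 ≤ q)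
    (hpqr : 1 / r = 1 / p + 1 / q) {a b g s t : Ω → ℝ} (hg : AEStronglyMeasurable g μ)
    (hs : AEStronglyMeasurable s μ) (ht : AEStronglyMeasurable t μ)
    (hab : ∀ᵐ x ∂μ, |a x - b x| ≤ g x) (hb : ∀ᵐ x ∂μ, |b x| ≤ M) :
    eLpNorm' (fun x => a x * s x ^ 2 - b x * t x ^ 2) r μ
      ≤ eLpNorm' g p μ * eLpNorm' s (2 * q) μ ^ 2
        + eLpNorm' (fun x => s x - t x) p μ * (‖M‖ₑ * (eLpNorm' s q μ + eLpNorm' t q μ)) :=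
  calc
    _ ≤ eLpNorm' g p μ * eLpNorm' (fun x => s x ^ 2) q μ
        + eLpNorm' (fun x => s x - t x) p μ * eLpNorm' (fun x => M * (‖s x‖ + ‖t x‖)) q μ := by
      refine eLpNorm'_le_of_norm_le_mul_add_mul hr hrp hpqr hg (hs.pow 2) (hs.sub ht)
        (aestronglyMeasurable_const.mul (hs.norm.add ht.norm)) ?_
      filter_upwards [hab, hb] with x hx₁ hx₂
      simp only [Real.norm_eq_abs]
      calc
        _ ≤ g x * s x ^ 2 + M * (|s x| + |t x|) * |s x - t x| :=
          abs_mul_sq_sub_mul_sq_le hx₁ hx₂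
        _ ≤ |g x| * |s x ^ 2| + |s x - t x| * |M * (|s x| + |t x|)| := by
          rw [abs_sq, mul_comm (M * _)]
          gcongr <;> exact le_abs_self _
    _ ≤ _ := by
      rw [eLpNorm'_pow 2 two_ne_zero, Nat.cast_ofNat]
      gcongr
      exact eLpNorm'_const_mul_norm_add_norm_le M hq hs ht

theorem eLpNorm'_quadratic_logistic_sub_le {h : ℝ → ℝ → ℝ} {L hbar : ℝ}
    (h_bdd : ∀ s r : ℝ, |h s r| ≤ hbar)
    (h_lip : ∀ s₁ r₁ s₂ r₂ : ℝ, |h s₁ r₁ - h s₂ r₂| ≤ L * (|s₁ - s₂| + |r₁ - r₂|))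
    {σ₁ σ₂ φ₁ φ₂ : Ω → ℝ} (hσ₁ : AEStronglyMeasurable σ₁ μ) (hσ₂ : AEStronglyMeasurable σ₂ μ)
    (hφ₁ : AEStronglyMeasurable φ₁ μ) (hφ₂ : AEStronglyMeasurable φ₂ μ) :
    eLpNorm' (fun x => h (σ₁ x) (φ₁ x) * σ₁ x ^ 2 - h (σ₂ x) (φ₂ x) * σ₂ x ^ 2) (6 / 5) μ
      ≤ ‖L‖ₑ * (eLpNorm' (fun x => σ₁ x - σ₂ x) 2 μ + eLpNorm' (fun x => φ₁ x - φ₂ x) 2 μ)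
          * eLpNorm' σ₁ 6 μ ^ 2
        + eLpNorm' (fun x => σ₁ x - σ₂ x) 2 μ
          * (‖hbar‖ₑ * (eLpNorm' σ₁ 3 μ + eLpNorm' σ₂ 3 μ)) := by
  have hbound := eLpNorm'_mul_sq_sub_mul_sq_le (p := 2) (q := 3) (r := 6 / 5)
    (g := fun x => L * (‖σ₁ x - σ₂ x‖ + ‖φ₁ x - φ₂ x‖)) (by norm_num) (by norm_num)
    (by norm_num) (by norm_num) (by fun_prop) hσ₁ hσ₂
    (ae_of_all _ fun _ => h_lip _ _ _ _) (ae_of_all _ fun _ => h_bdd _ _)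
  grw [eLpNorm'_const_mul_norm_add_norm_le L one_le_two (by fun_prop) (by fun_prop)] at hbound
  rwa [show (2 : ℝ) * 3 = 6 by norm_num] at hbound

end eLpNorm'

/-- **`L^{6/5}` Lipschitz–Hölder estimate for the difference of quadratic logistic
terms.** On a finite measure space, if `|h| ≤ h̄` and `h` is `L`-Lipschitz in both
arguments, `σ₁ ∈ L⁶`, `σ₂ ∈ L³`, `φ₁, φ₂ ∈ L²`, then
`‖h(σ₁,φ₁)σ₁² − h(σ₂,φ₂)σ₂²‖_{6/5} ≤ L(‖σ₁−σ₂‖₂ + ‖φ₁−φ₂‖₂)‖σ₁‖₆²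
  + h̄(‖σ₁‖₃ + ‖σ₂‖₃)‖σ₁−σ₂‖₂`. -/
theorem quadratic_logistic_difference_L65_estimate
    {Ω : Type*} [MeasurableSpace Ω] (μ : Measure Ω) [IsFiniteMeasure μ]
    (hbar L : ℝ) (hhbar : 0 < hbar) (hL : 0 < L)
    (h : ℝ → ℝ → ℝ)
    (h_bdd : ∀ s r : ℝ, |h s r| ≤ hbar)
    (h_lip : ∀ s₁ r₁ s₂ r₂ : ℝ, |h s₁ r₁ - h s₂ r₂| ≤ L * (|s₁ - s₂| + |r₁ - r₂|))
    (σ₁ σ₂ φ₁ φ₂ : Ω → ℝ)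
    (hσ₁m : Measurable σ₁) (hσ₂m : Measurable σ₂)
    (hφ₁m : Measurable φ₁) (hφ₂m : Measurable φ₂)
    (hσ₁ : Integrable (fun x => |σ₁ x| ^ (6:ℝ)) μ)
    (hσ₂ : Integrable (fun x => |σ₂ x| ^ (3:ℝ)) μ)
    (hφ₁ : Integrable (fun x => |φ₁ x| ^ (2:ℝ)) μ)
    (hφ₂ : Integrable (fun x => |φ₂ x| ^ (2:ℝ)) μ) :
    Lpnorm μ (6/5) (fun x => h (σ₁ x) (φ₁ x) * (σ₁ x) ^ 2 - h (σ₂ x) (φ₂ x) * (σ₂ x) ^ 2)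
      ≤ L * (Lpnorm μ 2 (fun x => σ₁ x - σ₂ x) + Lpnorm μ 2 (fun x => φ₁ x - φ₂ x))
            * (Lpnorm μ 6 σ₁) ^ 2
        + hbar * (Lpnorm μ 3 σ₁ + Lpnorm μ 3 σ₂) * Lpnorm μ 2 (fun x => σ₁ x - σ₂ x) := by
  have h_meas : Measurable (Function.uncurry h) :=
    (lipschitzWith_uncurry_of_abs_sub_le hL.le h_lip).continuous.measurable
  have hH : AEStronglyMeasurable
      (fun x => h (σ₁ x) (φ₁ x) * σ₁ x ^ 2 - h (σ₂ x) (φ₂ x) * σ₂ x ^ 2) μ :=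
    (((h_meas.comp (hσ₁m.prodMk hφ₁m)).mul (hσ₁m.pow_const 2)).sub
      ((h_meas.comp (hσ₂m.prodMk hφ₂m)).mul (hσ₂m.pow_const 2))).aestronglyMeasurable
  have hbound := eLpNorm'_quadratic_logistic_sub_le (μ := μ) h_bdd h_lip hσ₁m.aestronglyMeasurable
    hσ₂m.aestronglyMeasurable hφ₁m.aestronglyMeasurable hφ₂m.aestronglyMeasurable
  have mσ₁ := memLp_ofReal_of_integrable_abs_rpow (by norm_num) hσ₁m.aestronglyMeasurable hσ₁
  have mσ₂ := memLp_ofReal_of_integrable_abs_rpow (by norm_num) hσ₂m.aestronglyMeasurable hσ₂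
  have mφ₁ := memLp_ofReal_of_integrable_abs_rpow two_pos hφ₁m.aestronglyMeasurable hφ₁
  have mφ₂ := memLp_ofReal_of_integrable_abs_rpow two_pos hφ₂m.aestronglyMeasurable hφ₂
  have fσ_sub : eLpNorm' (fun x => σ₁ x - σ₂ x) 2 μ ≠ ⊤ := eLpNorm'_ne_top_of_memLp two_pos <|
    (mσ₁.mono_exponent (by norm_num)).sub (mσ₂.mono_exponent (by norm_num))
  have fφ_sub : eLpNorm' (fun x => φ₁ x - φ₂ x) 2 μ ≠ ⊤ :=
    eLpNorm'_ne_top_of_memLp two_pos (mφ₁.sub mφ₂)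
  have fσ₁6 := eLpNorm'_ne_top_of_memLp (by norm_num) mσ₁
  have fσ₁3 := eLpNorm'_ne_top_of_memLp (p := 3) (by norm_num) (mσ₁.mono_exponent (by norm_num))
  have fσ₂3 := eLpNorm'_ne_top_of_memLp (by norm_num) mσ₂
  simp (disch := first | positivity | assumption | fun_prop) only [Lpnorm_eq_toReal_eLpNorm']
  refine (ENNReal.toReal_mono (by finiteness) hbound).trans_eq ?_
  rw [ENNReal.toReal_add (by finiteness) (by finiteness)]
  simp only [ENNReal.toReal_mul, ENNReal.toReal_pow, ENNReal.toReal_add, toReal_enorm,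
    Real.norm_of_nonneg, fσ_sub, fφ_sub, fσ₁3, fσ₂3, hL.le, hhbar.le, ne_eq, not_false_eq_true]
  ring
end
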